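/- For every positive integer n and real λ > 0, ∫_{−1}^{x} (1−y²)^{−λ−1/2} ∫_{−1}^{y} (1−z²)^{λ−1/2} C_n^λ(z) dz dy = (C_n^λ(−1) − C_n^λ(x)) / (n(n+2λ)) for all x ∈ (−1,1). -/

import Mathlib

/-!
The three-term recurrence gives the first-order relations `x C'ₙ₊₁ - C'ₙ = (n+1) Cₙ₊₁` and
`C'ₙ₊₁ - x C'ₙ = (n+2λ) Cₙ`, hence `(1 - x²) C'ₙ₊₁ = -(n+1) x Cₙ₊₁ + (n+2λ) Cₙ`. Writing
`(1 - x²)^(λ+1/2) C'ₙ₊₁` as `(1 - x²)^(λ-1/2)` times this right-hand side and differentiating gives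
the Gegenbauer equation in Sturm–Liouville form, `((1 - x²)^(λ+1/2) C'ₙ)' = -n(n+2λ) (1 - x²)^(λ-1/2) Cₙ`
on `(-1, 1)`, without second derivatives. As `λ + 1/2 > 0` the boundary term at `-1` vanishes, so the
inner integral is `-(1 - y²)^(λ+1/2) C'ₙ(y) / (n(n+2λ))`; the weights cancel, and the outer integral
is that of `-C'ₙ / (n(n+2λ))`.
-/
/-- The Gegenbauer (ultraspherical) polynomial `C_n^lam`, defined via the standard
three-term recurrence `(n+2) C_{n+2}(x) = 2 (n+1+lam) x C_{n+1}(x) - (n+2 lam) C_n(x)`,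
with `C_0 = 1` and `C_1(x) = 2 lam x`. -/
noncomputable def gegenbauer (lam : ℝ) : ℕ → ℝ → ℝ
  | 0, _ => 1
  | 1, x => 2 * lam * x
  | (n + 2), x =>
      (2 * ((n : ℝ) + 1 + lam) * x * gegenbauer lam (n + 1) x
        - ((n : ℝ) + 2 * lam) * gegenbauer lam n x) / ((n : ℝ) + 2)

open Set MeasureTheory

noncomputable def gegenbauerDeriv (lam : ℝ) : ℕ → ℝ → ℝ
  | 0, _ => 0
  | 1, _ => 2 * lam
  | (n + 2), x =>
      (2 * ((n : ℝ) + 1 + lam) * (gegenbauer lam (n + 1) x + x * gegenbauerDeriv lam (n + 1) x)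
        - ((n : ℝ) + 2 * lam) * gegenbauerDeriv lam n x) / ((n : ℝ) + 2)

section Gegenbauer

variable (lam : ℝ)

theorem hasDerivAt_gegenbauer :
    ∀ (n : ℕ) (x : ℝ), HasDerivAt (gegenbauer lam n) (gegenbauerDeriv lam n x) x
  | 0, x => by simpa [gegenbauer, gegenbauerDeriv] using hasDerivAt_const x (1 : ℝ)
  | 1, x => by simpa [gegenbauer, gegenbauerDeriv] using (hasDerivAt_id x).const_mul (2 * lam)
  | (n + 2), x => by
      have h := ((((hasDerivAt_id x).const_mul (2 * ((n : ℝ) + 1 + lam))).mul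
        (hasDerivAt_gegenbauer (n + 1) x)).sub
        ((hasDerivAt_gegenbauer n x).const_mul ((n : ℝ) + 2 * lam))).div_const ((n : ℝ) + 2)
      have hfun : (fun t => (2 * ((n : ℝ) + 1 + lam) * t * gegenbauer lam (n + 1) t
          - ((n : ℝ) + 2 * lam) * gegenbauer lam n t) / ((n : ℝ) + 2)) = gegenbauer lam (n + 2) :=
        rfl
      simp only [id_eq, Pi.mul_apply, Pi.sub_apply, hfun] at h
      refine h.congr_deriv ?_
      simp only [gegenbauerDeriv]
      ring

theorem continuous_gegenbauer (n : ℕ) : Continuous (gegenbauer lam n) :=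
  continuous_iff_continuousAt.mpr fun x => (hasDerivAt_gegenbauer lam n x).continuousAt

theorem continuous_gegenbauerDeriv : ∀ n : ℕ, Continuous (gegenbauerDeriv lam n)
  | 0 => continuous_const
  | 1 => continuous_const
  | (n + 2) => by
      have hn := continuous_gegenbauerDeriv n
      have hn1 := continuous_gegenbauerDeriv (n + 1)
      have hc := continuous_gegenbauer lam (n + 1)
      show Continuous fun x => (2 * ((n : ℝ) + 1 + lam) *
        (gegenbauer lam (n + 1) x + x * gegenbauerDeriv lam (n + 1) x)
          - ((n : ℝ) + 2 * lam) * gegenbauerDeriv lam n x) / ((n : ℝ) + 2)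
      fun_prop

theorem gegenbauerDeriv_recurrences (x : ℝ) (n : ℕ) :
    x * gegenbauerDeriv lam (n + 1) x - gegenbauerDeriv lam n x
        = ((n : ℝ) + 1) * gegenbauer lam (n + 1) x ∧
      gegenbauerDeriv lam (n + 1) x - x * gegenbauerDeriv lam n x
        = ((n : ℝ) + 2 * lam) * gegenbauer lam n x := by
  induction n with
  | zero => exact ⟨by simp [gegenbauerDeriv, gegenbauer, mul_comm], by simp [gegenbauerDeriv, gegenbauer]⟩
  | succ n ih =>
    obtain ⟨hB, hC⟩ := ih
    have h2 : ((n : ℝ) + 2) ≠ 0 := by positivity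
    have hc2 : ((n : ℝ) + 2) * gegenbauer lam (n + 2) x
        = 2 * ((n : ℝ) + 1 + lam) * x * gegenbauer lam (n + 1) x
          - ((n : ℝ) + 2 * lam) * gegenbauer lam n x := by
      simp only [gegenbauer]; field_simp
    have hd2 : ((n : ℝ) + 2) * gegenbauerDeriv lam (n + 2) x
        = 2 * ((n : ℝ) + 1 + lam) * (gegenbauer lam (n + 1) x + x * gegenbauerDeriv lam (n + 1) x)
          - ((n : ℝ) + 2 * lam) * gegenbauerDeriv lam n x := by
      simp only [gegenbauerDeriv]; field_simp
    push_cast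
    constructor
    · refine mul_left_cancel₀ h2 ?_
      linear_combination x * hd2 - ((n : ℝ) + 2) * hc2 + 2 * ((n : ℝ) + 1 + lam) * x * hB
        - ((n : ℝ) + 2) * hC
    · refine mul_left_cancel₀ h2 ?_
      linear_combination hd2 + ((n : ℝ) + 2 * lam) * hB

theorem one_sub_sq_mul_gegenbauerDeriv (n : ℕ) (x : ℝ) :
    (1 - x ^ 2) * gegenbauerDeriv lam (n + 1) x
      = -((n : ℝ) + 1) * x * gegenbauer lam (n + 1) x + ((n : ℝ) + 2 * lam) * gegenbauer lam n x := by
  obtain ⟨hB, hC⟩ := gegenbauerDeriv_recurrences lam x n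
  linear_combination -x * hB + hC

theorem hasDerivAt_one_sub_sq_rpow_mul_gegenbauerDeriv (n : ℕ) {z : ℝ}
    (hz : z ∈ Ioo (-1 : ℝ) 1) :
    HasDerivAt (fun t => (1 - t ^ 2) ^ (lam + 1 / 2) * gegenbauerDeriv lam (n + 1) t)
      (-(((n : ℝ) + 1) * ((n : ℝ) + 1 + 2 * lam)) *
        ((1 - z ^ 2) ^ (lam - 1 / 2) * gegenbauer lam (n + 1) z)) z := by
  set G : ℝ → ℝ := fun t =>
    -((n : ℝ) + 1) * t * gegenbauer lam (n + 1) t + ((n : ℝ) + 2 * lam) * gegenbauer lam n t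
  have hpos : 0 < 1 - z ^ 2 := by nlinarith [hz.1, hz.2]
  have hsq : HasDerivAt (fun t : ℝ => 1 - t ^ 2) (-(2 * z)) z := by
    simpa using (hasDerivAt_pow 2 z).const_sub 1
  have hG : HasDerivAt G (-((n : ℝ) + 1) * gegenbauer lam (n + 1) z
      - ((n : ℝ) + 1) * z * gegenbauerDeriv lam (n + 1) z
      + ((n : ℝ) + 2 * lam) * gegenbauerDeriv lam n z) z := by
    refine ((((hasDerivAt_id z).const_mul (-((n : ℝ) + 1))).mul
      (hasDerivAt_gegenbauer lam (n + 1) z)).add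
      ((hasDerivAt_gegenbauer lam n z).const_mul ((n : ℝ) + 2 * lam))).congr_deriv ?_
    simp only [id_eq]
    ring
  have hloc : (fun t => (1 - t ^ 2) ^ (lam - 1 / 2) * G t) =ᶠ[nhds z]
      fun t => (1 - t ^ 2) ^ (lam + 1 / 2) * gegenbauerDeriv lam (n + 1) t := by
    filter_upwards [continuousAt_const.eventually_lt
      (by fun_prop : ContinuousAt (fun t : ℝ => 1 - t ^ 2) z) hpos] with t ht
    rw [show G t = (1 - t ^ 2) * gegenbauerDeriv lam (n + 1) t from
      (one_sub_sq_mul_gegenbauerDeriv lam n t).symm, ← mul_assoc, ← Real.rpow_add_one ht.ne',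
      show lam - 1 / 2 + 1 = lam + 1 / 2 by ring]
  refine ((hsq.rpow_const (p := lam - 1 / 2) (Or.inl hpos.ne')).mul hG).congr_of_eventuallyEq
    hloc.symm |>.congr_deriv ?_
  have hw : (1 - z ^ 2) ^ (lam - 1 / 2) = (1 - z ^ 2) ^ (lam - 1 / 2 - 1) * (1 - z ^ 2) := by
    rw [← Real.rpow_add_one hpos.ne', sub_add_cancel]
  obtain ⟨hB, -⟩ := gegenbauerDeriv_recurrences lam z n
  have hA := one_sub_sq_mul_gegenbauerDeriv lam n z
  rw [hw]
  linear_combination (1 - z ^ 2) ^ (lam - 1 / 2 - 1) *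
    (-(1 - 2 * lam) * z * hA - (1 - z ^ 2) * ((n : ℝ) + 2 * lam) * hB)

end Gegenbauer

theorem intervalIntegrable_one_sub_sq_rpow_mul {r y : ℝ} (hr : -1 < r) (hy : y ∈ Ico (-1 : ℝ) 1)
    {g : ℝ → ℝ} (hg : ContinuousOn g (Icc (-1) y)) :
    IntervalIntegrable (fun z => (1 - z ^ 2) ^ r * g z) volume (-1) y := by
  have hIcc : uIcc (-1) y = Icc (-1) y := uIcc_of_le hy.1
  have hbase : IntervalIntegrable (fun z : ℝ => (z + 1) ^ r) volume (-1) y := by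
    simpa using (intervalIntegral.intervalIntegrable_rpow' (a := 0) (b := y + 1) hr).comp_add_right 1
  have hcont : ContinuousOn (fun z : ℝ => (1 - z) ^ r * g z) (uIcc (-1) y) := by
    rw [hIcc]
    refine ContinuousOn.mul (fun z hz => ?_) hg
    exact ((by fun_prop : ContinuousAt (fun z : ℝ => 1 - z) z).rpow_const
      (Or.inl (by linarith [hz.2, hy.2]))).continuousWithinAt
  refine (intervalIntegrable_congr fun z hz => ?_).mp (hbase.mul_continuousOn hcont)
  rw [uIoc_of_le hy.1] at hz
  rw [show 1 - z ^ 2 = (z + 1) * (1 - z) by ring,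
    Real.mul_rpow (by linarith [hz.1]) (by linarith [hz.2, hy.2]), mul_assoc]

theorem integral_one_sub_sq_rpow_mul_gegenbauer {lam : ℝ} (hlam : 0 < lam) (n : ℕ) {y : ℝ}
    (hy : y ∈ Ico (-1 : ℝ) 1) :
    ∫ z in (-1 : ℝ)..y, (1 - z ^ 2) ^ (lam - 1 / 2) * gegenbauer lam (n + 1) z
      = -((1 - y ^ 2) ^ (lam + 1 / 2) * gegenbauerDeriv lam (n + 1) y) /
          (((n : ℝ) + 1) * ((n : ℝ) + 1 + 2 * lam)) := by
  have hN : 0 < ((n : ℝ) + 1) * ((n : ℝ) + 1 + 2 * lam) := by positivity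
  set F : ℝ → ℝ := fun t =>
    -((1 - t ^ 2) ^ (lam + 1 / 2) * gegenbauerDeriv lam (n + 1) t) /
      (((n : ℝ) + 1) * ((n : ℝ) + 1 + 2 * lam))
  have hF : Continuous F := by
    have := continuous_gegenbauerDeriv lam (n + 1)
    exact ((((continuous_const.sub (continuous_pow 2)).rpow_const
      fun _ => Or.inr (by positivity)).mul this).neg).div_const _
  have hFderiv : ∀ t ∈ Ioo (-1 : ℝ) y, HasDerivWithinAt F
      ((1 - t ^ 2) ^ (lam - 1 / 2) * gegenbauer lam (n + 1) t) (Ioi t) t := by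
    intro t ht
    refine (((hasDerivAt_one_sub_sq_rpow_mul_gegenbauerDeriv lam n
      ⟨ht.1, ht.2.trans hy.2⟩).neg.div_const _).congr_deriv ?_).hasDerivWithinAt
    field_simp
  have hF₀ : F (-1) = 0 := by
    simp only [F]
    rw [show (1 : ℝ) - (-1) ^ 2 = 0 by norm_num, Real.zero_rpow (by positivity)]
    simp
  rw [intervalIntegral.integral_eq_sub_of_hasDeriv_right_of_le hy.1 hF.continuousOn hFderiv
    (intervalIntegrable_one_sub_sq_rpow_mul (by linarith) hy
      (continuous_gegenbauer lam (n + 1)).continuousOn), hF₀, sub_zero]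

theorem iterated_integral_gegenbauer_left (lam : ℝ) (hlam : 0 < lam) (n : ℕ) (hn : 1 ≤ n)
    (x : ℝ) (hx : x ∈ Set.Ioo (-1 : ℝ) 1) :
    (∫ y in (-1 : ℝ)..x, (1 - y ^ 2) ^ (-lam - 1 / 2) *
        ∫ z in (-1 : ℝ)..y, (1 - z ^ 2) ^ (lam - 1 / 2) * gegenbauer lam n z) =
      (gegenbauer lam n (-1) - gegenbauer lam n x) / ((n : ℝ) * ((n : ℝ) + 2 * lam)) := by
  obtain ⟨m, rfl⟩ : ∃ m, n = m + 1 := ⟨n - 1, by omega⟩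
  have hinner : EqOn (fun y => (1 - y ^ 2) ^ (-lam - 1 / 2) *
        ∫ z in (-1 : ℝ)..y, (1 - z ^ 2) ^ (lam - 1 / 2) * gegenbauer lam (m + 1) z)
      (fun y => -gegenbauerDeriv lam (m + 1) y / (((m : ℝ) + 1) * ((m : ℝ) + 1 + 2 * lam)))
      (uIoc (-1) x) := by
    intro y hy
    rw [uIoc_of_le hx.1.le] at hy
    have hpos : 0 < 1 - y ^ 2 := by nlinarith [hy.1, hy.2, hx.2]
    dsimp only
    rw [integral_one_sub_sq_rpow_mul_gegenbauer hlam m ⟨hy.1.le, hy.2.trans_lt hx.2⟩,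
      mul_div_assoc', mul_neg, ← mul_assoc, ← Real.rpow_add hpos]
    norm_num
  rw [intervalIntegral.integral_congr_ae (.of_forall fun y hy => hinner hy),
    intervalIntegral.integral_eq_sub_of_hasDerivAt
      (fun t _ => ((hasDerivAt_gegenbauer lam (m + 1) t).neg.div_const _))
      (Continuous.intervalIntegrable (by have := continuous_gegenbauerDeriv lam (m + 1); fun_prop) _ _)]
  simp only [Pi.neg_apply]
  push_cast
  ring
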